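/- arXiv:2006.02372 — 5 statements merged into one kernel-verified Lean document; each statement's English description precedes it below -/
import Mathlib

section
/- (Disjunctive Form Lemma) Let (A, Ω, +) be a semilattice ordered algebra generated by a subset X ⊆ A. Then every element r ∈ A can be written as r = r₁ + … + r_p for some finite number of elements r₁,…,r_p belonging to the subalgebra ⟨X⟩_Ω of the Ω-reduct (A, Ω) generated by X. -/
/-- Closure of a set under the operations `ω` only. -/
inductive OmegaCl {A : Type*} {ι : Type*} {n : ι → ℕ}
    (ω : ∀ i : ι, (Fin (n i) → A) → A) (X : Set A) : A → Prop
  | base : ∀ a ∈ X, OmegaCl ω X a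
  | op : ∀ (i : ι) (x : Fin (n i) → A),
      (∀ j, OmegaCl ω X (x j)) → OmegaCl ω X (ω i x)

/-- Closure of a set under the operations `ω` together with the join `⊔`. -/
inductive FullCl {A : Type*} [SemilatticeSup A] {ι : Type*} {n : ι → ℕ}
    (ω : ∀ i : ι, (Fin (n i) → A) → A) (X : Set A) : A → Prop
  | base : ∀ a ∈ X, FullCl ω X a
  | op : ∀ (i : ι) (x : Fin (n i) → A),
      (∀ j, FullCl ω X (x j)) → FullCl ω X (ω i x)
  | sup : ∀ a b, FullCl ω X a → FullCl ω X b → FullCl ω X (a ⊔ b)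

/-!
The finite joins of elements of `⟨X⟩_Ω` form the join-closure of `⟨X⟩_Ω`; it contains `X` and is
closed under `⊔`. It is also closed under every `ω`: since `ω` distributes over `⊔` in each
argument separately, the arguments can be expanded into joins one coordinate at a time. Hence it
contains the whole algebra generated by `X`.
-/

open Finset Function

section supClosure

variable {α β : Type*} [SemilatticeSup α] [SemilatticeSup β]

lemma mapsTo_supClosure {f : α → β} (hf : ∀ a b, f (a ⊔ b) = f a ⊔ f b) {s : Set α} {t : Set β}
    (hst : Set.MapsTo f s (supClosure t)) : Set.MapsTo f (supClosure s) (supClosure t) := by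
  rintro _ ⟨u, hu, hus, rfl⟩
  rw [apply_sup'_eq_sup'_comp hu f hf]
  exact supClosed_supClosure.finsetSup'_mem hu fun a ha => hst (hus ha)

lemma apply_update_sup {κ : Type*} [DecidableEq κ] {g : (κ → α) → β}
    (hg : ∀ x j b, g (update x j (x j ⊔ b)) = g x ⊔ g (update x j b))
    (x : κ → α) (j : κ) (a b : α) :
    g (update x j (a ⊔ b)) = g (update x j a) ⊔ g (update x j b) := by
  simpa using hg (update x j a) j b

lemma apply_mem_supClosure {κ : Type*} [Fintype κ] [DecidableEq κ] {g : (κ → α) → β}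
    (hg : ∀ x j a b, g (update x j (a ⊔ b)) = g (update x j a) ⊔ g (update x j b))
    {s : Set α} {t : Set β} (hst : ∀ x, (∀ j, x j ∈ s) → g x ∈ supClosure t)
    {x : κ → α} (hx : ∀ j, x j ∈ supClosure s) : g x ∈ supClosure t := by
  suffices ∀ c : Finset κ, ∀ x : κ → α, (∀ j ∉ c, x j ∈ s) → (∀ j ∈ c, x j ∈ supClosure s) →
      g x ∈ supClosure t from this univ x (fun j hj => absurd (mem_univ j) hj) fun j _ => hx j
  intro c
  induction c using Finset.induction with
  | empty => exact fun x hs _ => hst x fun j => hs j (notMem_empty j)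
  | insert j c hjc ih =>
    intro x hs hsup
    have hmaps : Set.MapsTo (fun a => g (update x j a)) s (supClosure t) := by
      refine fun a ha => ih _ (fun k hk => ?_) (fun k hk => ?_)
      · rcases eq_or_ne k j with rfl | hkj
        · rwa [update_self]
        · rw [update_of_ne hkj]
          exact hs k (by simp [hk, hkj])
      · rw [update_of_ne (ne_of_mem_of_not_mem hk hjc)]
        exact hsup k (mem_insert_of_mem hk)
    simpa using mapsTo_supClosure (hg x j) hmaps (hsup j (mem_insert_self j c))

lemma exists_fin_sup'_eq_of_mem_supClosure {s : Set α} {a : α} (ha : a ∈ supClosure s) :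
    ∃ (p : ℕ) (f : Fin (p + 1) → α), (∀ j, f j ∈ s) ∧ a = univ.sup' univ_nonempty f := by
  obtain ⟨u, hu, hus, rfl⟩ := ha
  obtain ⟨p, hp⟩ := Nat.exists_eq_add_one_of_ne_zero hu.card_pos.ne'
  let e : Fin (p + 1) ≃ u := (u.equivFin.trans (finCongr hp)).symm
  refine ⟨p, fun k => e k, fun k => hus (e k).2, le_antisymm ?_ ?_⟩
  · refine sup'_le _ _ fun b hb => ?_
    simpa using le_sup' (fun k => (e k : α)) (mem_univ (e.symm ⟨b, hb⟩))
  · exact sup'_le _ _ fun k _ => le_sup' id (e k).2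

end supClosure

section OmegaCl

variable {A : Type*} [SemilatticeSup A] {ι : Type*} {n : ι → ℕ}
  {ω : ∀ i : ι, (Fin (n i) → A) → A} {X : Set A}

lemma omega_mem_supClosure_omegaCl
    (hdist : ∀ (i : ι) (x : Fin (n i) → A) (j : Fin (n i)) (y : A),
      ω i (update x j (x j ⊔ y)) = ω i x ⊔ ω i (update x j y))
    (i : ι) {x : Fin (n i) → A} (hx : ∀ j, x j ∈ supClosure {a | OmegaCl ω X a}) :
    ω i x ∈ supClosure {a | OmegaCl ω X a} :=
  apply_mem_supClosure (apply_update_sup (hdist i))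
    (fun y hy => subset_supClosure (OmegaCl.op i y hy)) hx

lemma FullCl.mem_supClosure_omegaCl
    (hdist : ∀ (i : ι) (x : Fin (n i) → A) (j : Fin (n i)) (y : A),
      ω i (update x j (x j ⊔ y)) = ω i x ⊔ ω i (update x j y))
    {a : A} (ha : FullCl ω X a) : a ∈ supClosure {a | OmegaCl ω X a} := by
  induction ha with
  | base a ha => exact subset_supClosure (OmegaCl.base a ha)
  | op i x _ ih => exact omega_mem_supClosure_omegaCl hdist i ih
  | sup a b _ _ iha ihb => exact supClosed_supClosure iha ihb

end OmegaCl

/-- Disjunctive Form Lemma: in a semilattice ordered algebra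
generated by `X`, every element is a finite join of elements of `⟨X⟩_Ω`. -/
theorem disjunctive_form {A : Type*} [SemilatticeSup A]
    {ι : Type*} {n : ι → ℕ} (ω : ∀ i : ι, (Fin (n i) → A) → A)
    (hdist : ∀ (i : ι) (x : Fin (n i) → A) (j : Fin (n i)) (y : A),
      ω i (Function.update x j (x j ⊔ y)) = ω i x ⊔ ω i (Function.update x j y))
    (X : Set A) (hgen : ∀ a : A, FullCl ω X a) :
    ∀ r : A, ∃ (p : ℕ) (f : Fin (p + 1) → A),
      (∀ j, OmegaCl ω X (f j)) ∧
      r = Finset.univ.sup' Finset.univ_nonempty f :=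
  fun r => exists_fin_sup'_eq_of_mem_supClosure ((hgen r).mem_supClosure_omegaCl hdist)
end

section
/- Let (A, Ω, +) be a semilattice ordered algebra and t an n-ary linear Ω-term (each variable occurs at most once in t). Then the term operation t : Aⁿ → A distributes over +: for each index i, t(x₁,…,xᵢ+yᵢ,…,xₙ) = t(x₁,…,xᵢ,…,xₙ) + t(x₁,…,yᵢ,…,xₙ). -/
/-!
Induction on the term, for a fixed variable `j` occurring at most once in it.
If `j` does not occur, updating it changes nothing and the claim is `a = a ⊔ a`.
Otherwise `t = ω(t₁, …, tₖ)` with `j` occurring in exactly one `tₖ₀`, so updating `j`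
only changes the `k₀`-th argument of `ω`; the induction hypothesis for `tₖ₀` followed by
the distributivity of `ω` in position `k₀` gives the claim.
-/

/-- Ω-terms of type given by arities `n : ι → ℕ` in `m` variables. -/
inductive OmegaTerm (ι : Type) (n : ι → ℕ) (m : ℕ) : Type
  | var : Fin m → OmegaTerm ι n m
  | op : ∀ i : ι, (Fin (n i) → OmegaTerm ι n m) → OmegaTerm ι n m

/-- Number of occurrences of a variable in a term. -/
def OmegaTerm.occ {ι : Type} {n : ι → ℕ} {m : ℕ} :
    OmegaTerm ι n m → Fin m → ℕ
  | .var w, v => if w = v then 1 else 0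
  | .op i f, v => ∑ k : Fin (n i), (f k).occ v

/-- Evaluation of a term in an algebra `(A, ω)`. -/
def OmegaTerm.eval {ι : Type} {n : ι → ℕ} {m : ℕ} {A : Type*}
    (ω : ∀ i : ι, (Fin (n i) → A) → A) :
    OmegaTerm ι n m → (Fin m → A) → A
  | .var w, x => x w
  | .op i f, x => ω i fun k => (f k).eval ω x

namespace OmegaTerm

variable {ι : Type} {n : ι → ℕ} {m : ℕ} {A : Type*}

theorem occ_le_occ_op {i : ι} (f : Fin (n i) → OmegaTerm ι n m) (k : Fin (n i)) (v : Fin m) :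
    (f k).occ v ≤ (op i f).occ v :=
  Finset.single_le_sum (f := fun k => (f k).occ v) (fun _ _ => Nat.zero_le _)
    (Finset.mem_univ k)

theorem occ_eq_zero_of_occ_op_le_one {i : ι} {f : Fin (n i) → OmegaTerm ι n m} {v : Fin m}
    (h : (op i f).occ v ≤ 1) {k₀ k : Fin (n i)} (hk₀ : (f k₀).occ v ≠ 0)
    (hk : k ≠ k₀) :
    (f k).occ v = 0 := by
  have : (f k).occ v + (f k₀).occ v ≤ (op i f).occ v :=
    Finset.add_le_sum (f := fun k => (f k).occ v) (fun _ _ => Nat.zero_le _)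
      (Finset.mem_univ k) (Finset.mem_univ k₀) hk
  omega

theorem eval_update_of_occ_eq_zero (ω : ∀ i : ι, (Fin (n i) → A) → A) {t : OmegaTerm ι n m}
    {j : Fin m} (h : t.occ j = 0) (x : Fin m → A) (a : A) :
    t.eval ω (Function.update x j a) = t.eval ω x := by
  induction t with
  | var w =>
    have hw : w ≠ j := by rintro rfl; simp [occ] at h
    simp [eval, Function.update_of_ne hw]
  | op i f ih =>
    simp only [occ, Finset.sum_eq_zero_iff, Finset.mem_univ, forall_const] at h
    simp only [eval, ih _ (h _)]

theorem eval_op_update_of_occ_eq_zero (ω : ∀ i : ι, (Fin (n i) → A) → A) {i : ι}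
    {f : Fin (n i) → OmegaTerm ι n m} {j : Fin m} {k₀ : Fin (n i)}
    (h : ∀ k ≠ k₀, (f k).occ j = 0) (x : Fin m → A) (a : A) :
    (op i f).eval ω (Function.update x j a) =
      ω i (Function.update (fun k => (f k).eval ω x) k₀
        ((f k₀).eval ω (Function.update x j a))) := by
  simp only [eval]
  congr 1
  funext k
  rcases eq_or_ne k k₀ with rfl | hk
  · rw [Function.update_self]
  · rw [Function.update_of_ne hk, eval_update_of_occ_eq_zero ω (h k hk)]

theorem eval_update_sup_of_occ_le_one [SemilatticeSup A] (ω : ∀ i : ι, (Fin (n i) → A) → A)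
    (hdist : ∀ (i : ι) (x : Fin (n i) → A) (j : Fin (n i)) (y : A),
      ω i (Function.update x j (x j ⊔ y)) = ω i x ⊔ ω i (Function.update x j y))
    {t : OmegaTerm ι n m} {j : Fin m} (hj : t.occ j ≤ 1) (x : Fin m → A) (y : A) :
    t.eval ω (Function.update x j (x j ⊔ y)) =
      t.eval ω x ⊔ t.eval ω (Function.update x j y) := by
  induction t with
  | var w =>
    rcases eq_or_ne w j with rfl | hw
    · simp [eval]
    · simp [eval, Function.update_of_ne hw]
  | op i f ih =>
    by_cases h0 : (op i f).occ j = 0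
    · simp only [eval_update_of_occ_eq_zero ω h0, sup_idem]
    obtain ⟨k₀, -, hk₀⟩ := Finset.exists_ne_zero_of_sum_ne_zero h0
    have hothers : ∀ k ≠ k₀, (f k).occ j = 0 := fun k hk =>
      occ_eq_zero_of_occ_op_le_one hj hk₀ hk
    have hk₀_lin : (f k₀).occ j ≤ 1 := (occ_le_occ_op f k₀ j).trans hj
    rw [eval_op_update_of_occ_eq_zero ω hothers, eval_op_update_of_occ_eq_zero ω hothers,
      ih k₀ hk₀_lin]
    exact hdist i _ k₀ _

end OmegaTerm

/-- In a semilattice ordered algebra, the term operation of any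
linear term distributes over the join in each argument. -/
theorem linear_term_distributes {A : Type*} [SemilatticeSup A]
    {ι : Type} {n : ι → ℕ} (ω : ∀ i : ι, (Fin (n i) → A) → A)
    (hdist : ∀ (i : ι) (x : Fin (n i) → A) (j : Fin (n i)) (y : A),
      ω i (Function.update x j (x j ⊔ y)) = ω i x ⊔ ω i (Function.update x j y))
    {m : ℕ} (t : OmegaTerm ι n m) (hlin : ∀ v, t.occ v ≤ 1) :
    ∀ (x : Fin m → A) (j : Fin m) (y : A),
      t.eval ω (Function.update x j (x j ⊔ y)) =
        t.eval ω x ⊔ t.eval ω (Function.update x j y) :=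
  fun x j y => OmegaTerm.eval_update_sup_of_occ_le_one ω hdist (hlin j) x y
end

section
/- Let (A, ·, +) be a semilattice ordered algebra in which · is a semigroup operation distributing over + on both sides, generated by a set X such that the ·-subsemigroup ⟨X⟩ generated by X consists of idempotent elements (a·a = a for a ∈ ⟨X⟩). Then the identity a·a = a holds in all of A if and only if x + y = x + y + x·y + y·x holds for all x, y ∈ A. -/
/-! Distributivity gives `(u + v)² = u² + v² + uv + vu`. If `·` is idempotent this is the
law; conversely, under the law the idempotents are closed under `+`, and every element is a
join of elements of `⟨X⟩`, which are idempotent. -/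

section SemilatticeOrderedSemigroup

variable {A : Type*} [Semigroup A] [SemilatticeSup A]

theorem sup_mul_sup_self (hdistl : ∀ x y z : A, x * (y ⊔ z) = x * y ⊔ x * z)
    (hdistr : ∀ x y z : A, (x ⊔ y) * z = x * z ⊔ y * z) (u v : A) :
    (u ⊔ v) * (u ⊔ v) = u * u ⊔ v * v ⊔ u * v ⊔ v * u := by
  rw [hdistl, hdistr, hdistr]
  ac_rfl

theorem IsIdempotentElem.sup_of_sup_eq (hdistl : ∀ x y z : A, x * (y ⊔ z) = x * y ⊔ x * z)
    (hdistr : ∀ x y z : A, (x ⊔ y) * z = x * z ⊔ y * z)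
    (hlaw : ∀ x y : A, x ⊔ y = x ⊔ y ⊔ x * y ⊔ y * x) {u v : A}
    (hu : IsIdempotentElem u) (hv : IsIdempotentElem v) : IsIdempotentElem (u ⊔ v) := by
  rw [IsIdempotentElem, sup_mul_sup_self hdistl hdistr, hu.eq, hv.eq, ← hlaw]

end SemilatticeOrderedSemigroup

/-- Let `(A, ·, +)` be a semilattice ordered semigroup generated
by a set `X` whose generated subsemigroup `⟨X⟩` consists of idempotents (so
every element of `A` is a finite join of elements of `⟨X⟩`). Then `a·a = a`
holds in all of `A` iff `x + y = x + y + x·y + y·x` holds in `A`. -/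
theorem slo_semigroup_idempotent_iff {A : Type*} [Semigroup A] [SemilatticeSup A]
    (hdistl : ∀ x y z : A, x * (y ⊔ z) = x * y ⊔ x * z)
    (hdistr : ∀ x y z : A, (x ⊔ y) * z = x * z ⊔ y * z)
    (X : Set A)
    (hidem : ∀ a ∈ Subsemigroup.closure X, a * a = a)
    (hgen : ∀ a : A, ∃ (p : ℕ) (f : Fin (p + 1) → A),
      (∀ j, f j ∈ Subsemigroup.closure X) ∧
      a = Finset.univ.sup' Finset.univ_nonempty f) :
    (∀ a : A, a * a = a) ↔ (∀ x y : A, x ⊔ y = x ⊔ y ⊔ x * y ⊔ y * x) := by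
  constructor
  · intro h x y
    have expand := sup_mul_sup_self hdistl hdistr x y
    rwa [h x, h y, h (x ⊔ y)] at expand
  · intro hlaw a
    obtain ⟨p, f, hf, rfl⟩ := hgen a
    exact Finset.sup'_induction (p := IsIdempotentElem) _ _
      (fun _ hu _ hv => hu.sup_of_sup_eq hdistl hdistr hlaw hv)
      (fun j _ => hidem _ (hf j))
end

section
/- The free algebra on the empty set in the variety of commutative doubly idempotent semirings with constants 0 and 1 (where (S,+,0) is a join-semilattice with least element 0, (S,·,1) is a meet-type semilattice with unit 1, · distributes over +, and x·0 = 0) has exactly 2 elements, and the free algebra on one generator has exactly 4 elements. -/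
/-- A commutative doubly idempotent semiring with constants `0` and `1`:
`(S,·,1)` and `(S,+,0)` are commutative idempotent monoids, `·` distributes
over `+`, and `x·0 = 0`. -/
class CDIS (S : Type) where
  mul : S → S → S
  add : S → S → S
  zero : S
  one : S
  mul_assoc : ∀ a b c, mul (mul a b) c = mul a (mul b c)
  mul_comm : ∀ a b, mul a b = mul b a
  mul_idem : ∀ a, mul a a = a
  mul_one : ∀ a, mul a one = a
  add_assoc : ∀ a b c, add (add a b) c = add a (add b c)
  add_comm : ∀ a b, add a b = add b a
  add_idem : ∀ a, add a a = a
  add_zero : ∀ a, add a zero = a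
  mul_add : ∀ a b c, mul a (add b c) = add (mul a b) (mul a c)
  mul_zero : ∀ a, mul a zero = zero

/-- Homomorphisms of commutative doubly idempotent semirings with constants. -/
def CDIS.IsHom {S T : Type} [CDIS S] [CDIS T] (f : S → T) : Prop :=
  (∀ a b, f (CDIS.mul a b) = CDIS.mul (f a) (f b)) ∧
  (∀ a b, f (CDIS.add a b) = CDIS.add (f a) (f b)) ∧
  f (CDIS.zero : S) = CDIS.zero ∧ f (CDIS.one : S) = CDIS.one

/-- `F` with insertion of generators `ι : X → F` is free in the variety of
commutative doubly idempotent semirings with constants. -/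
def CDIS.IsFree (X : Type) (F : Type) [CDIS F] (ι : X → F) : Prop :=
  ∀ (T : Type) (_ : CDIS T) (g : X → T),
    ∃! f : F → T, CDIS.IsHom f ∧ f ∘ ι = g
/-!
Free algebras on the same generators are isomorphic, so it suffices to exhibit one free algebra
on each set of generators. On no generators this is `Bool`, i.e. `{0, 1}`. On one generator `x`
it is `{0, 1, x, 1 + x}`: the laws `x·x = x` and `x·1 = x` reduce every term to a sum of a subset
of `{1, x}`, and evaluating such sums is a homomorphism into any algebra.
-/

namespace CDIS

variable {S T U : Type} [CDIS S] [CDIS T] [CDIS U]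

theorem zero_mul (a : T) : mul zero a = zero := by
  rw [mul_comm, mul_zero]

theorem one_mul (a : T) : mul one a = a := by
  rw [mul_comm, mul_one]

theorem add_mul (a b c : T) : mul (add a b) c = add (mul a c) (mul b c) := by
  rw [mul_comm, mul_add, mul_comm c, mul_comm c]

theorem zero_add (a : T) : add zero a = a := by
  rw [add_comm, add_zero]

theorem add_left_comm (a b c : T) : add a (add b c) = add b (add a c) := by
  rw [← add_assoc, add_comm a, add_assoc]

theorem add_left_idem (a b : T) : add a (add a b) = add a b := by
  rw [← add_assoc, add_idem]

theorem IsHom.id : IsHom (id : S → S) :=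
  ⟨fun _ _ => rfl, fun _ _ => rfl, rfl, rfl⟩

theorem IsHom.comp {f : S → T} {g : T → U} (hg : IsHom g) (hf : IsHom f) :
    IsHom (g ∘ f) := by
  obtain ⟨gm, ga, g0, g1⟩ := hg
  obtain ⟨fm, fa, f0, f1⟩ := hf
  exact ⟨fun a b => by simp only [Function.comp, fm, gm],
    fun a b => by simp only [Function.comp, fa, ga],
    by simp only [Function.comp, f0, g0], by simp only [Function.comp, f1, g1]⟩

theorem IsFree.hom_ext {X F : Type} [CDIS F] {ι : X → F} (hF : IsFree X F ι)
    {f g : F → T} (hf : IsHom f) (hg : IsHom g) (hfg : f ∘ ι = g ∘ ι) : f = g :=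
  (hF T inferInstance (g ∘ ι)).unique ⟨hf, hfg⟩ ⟨hg, rfl⟩

theorem IsFree.card_eq {X F G : Type} [CDIS F] [CDIS G] {ι : X → F} {κ : X → G}
    (hF : IsFree X F ι) (hG : IsFree X G κ) : Nat.card F = Nat.card G := by
  obtain ⟨f, ⟨hf, hfι⟩, -⟩ := hF G inferInstance κ
  obtain ⟨g, ⟨hg, hgκ⟩, -⟩ := hG F inferInstance ι
  have hgf : g ∘ f = id := hF.hom_ext (hg.comp hf) IsHom.id <| by
    rw [Function.comp_assoc, hfι, hgκ, Function.id_comp]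
  have hfg : f ∘ g = id := hG.hom_ext (hf.comp hg) IsHom.id <| by
    rw [Function.comp_assoc, hgκ, hfι, Function.id_comp]
  exact Nat.card_congr ⟨f, g, congrFun hgf, congrFun hfg⟩

instance : CDIS Bool where
  mul := and
  add := or
  zero := false
  one := true
  mul_assoc := by decide
  mul_comm := by decide
  mul_idem := by decide
  mul_one := by decide
  add_assoc := by decide
  add_comm := by decide
  add_idem := by decide
  add_zero := by decide
  mul_add := by decide
  mul_zero := by decide

@[simp] theorem bool_mul_eq_and (a b : Bool) : mul a b = (a && b) := rfl

@[simp] theorem bool_add_eq_or (a b : Bool) : add a b = (a || b) := rfl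

def ofBool (b : Bool) : T := if b then one else zero

@[simp] theorem ofBool_false : (ofBool false : T) = zero := rfl

@[simp] theorem ofBool_true : (ofBool true : T) = one := rfl

theorem isHom_ofBool : IsHom (ofBool : Bool → T) := by
  refine ⟨?_, ?_, rfl, rfl⟩ <;> rintro (_ | _) (_ | _) <;>
    simp [mul_zero, mul_one, add_zero, zero_add, add_idem]

theorem isFree_bool : IsFree Empty Bool Empty.elim := by
  intro T _ g
  refine ⟨ofBool, ⟨isHom_ofBool, funext fun e => e.elim⟩, ?_⟩
  rintro f ⟨⟨-, -, hf0, hf1⟩, -⟩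
  funext b
  cases b
  exacts [hf0, hf1]

/-- `⟨c, d⟩` stands for `c·1 + d·x`, where `x` is the generator. -/
structure OneGen where
  coeffOne : Bool
  coeffGen : Bool
  deriving DecidableEq, Fintype

namespace OneGen

def gen : OneGen := ⟨false, true⟩

/-- Since `x·x = x`, every product except `1·1` contributes to the coefficient of `x`. -/
instance : CDIS OneGen where
  mul p q := ⟨p.1 && q.1, p.1 && q.2 || p.2 && q.1 || p.2 && q.2⟩
  add p q := ⟨p.1 || q.1, p.2 || q.2⟩
  zero := ⟨false, false⟩
  one := ⟨true, false⟩
  mul_assoc := by decide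
  mul_comm := by decide
  mul_idem := by decide
  mul_one := by decide
  add_assoc := by decide
  add_comm := by decide
  add_idem := by decide
  add_zero := by decide
  mul_add := by decide
  mul_zero := by decide

@[simp] theorem mul_def (p q : OneGen) :
    mul p q = ⟨p.1 && q.1, p.1 && q.2 || p.2 && q.1 || p.2 && q.2⟩ := rfl

@[simp] theorem add_def (p q : OneGen) : add p q = ⟨p.1 || q.1, p.2 || q.2⟩ := rfl

@[simp] theorem zero_def : (zero : OneGen) = ⟨false, false⟩ := rfl

@[simp] theorem one_def : (one : OneGen) = ⟨true, false⟩ := rfl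

def lift (x : T) (p : OneGen) : T := add (ofBool p.1) (mul (ofBool p.2) x)

theorem isHom_lift (x : T) : IsHom (lift x) := by
  refine ⟨?_, ?_, by simp [lift, zero_mul, add_zero], by simp [lift, zero_mul, add_zero]⟩
  · rintro ⟨_ | _, _ | _⟩ ⟨_ | _, _ | _⟩ <;>
      simp [lift, mul_zero, zero_mul, mul_one, one_mul, add_zero, zero_add, mul_idem, add_idem,
        mul_add, add_mul]
  · rintro ⟨_ | _, _ | _⟩ ⟨_ | _, _ | _⟩ <;>
      simp [lift, zero_mul, one_mul, add_zero, add_idem, add_left_idem, add_comm, add_left_comm]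

theorem isFree : IsFree PUnit OneGen (fun _ => gen) := by
  intro T _ g
  refine ⟨lift (g ()), ⟨isHom_lift _, ?_⟩, ?_⟩
  · funext u
    simp [lift, gen, zero_add, one_mul]
  · rintro f ⟨⟨-, hfadd, hf0, hf1⟩, hfgen⟩
    have hfx : f gen = g () := congrFun hfgen ()
    funext p
    obtain ⟨_ | _, _ | _⟩ := p
    · simp only [lift, ofBool_false, zero_mul, add_zero]
      exact hf0
    · simp only [lift, ofBool_false, ofBool_true, one_mul, zero_add]
      exact hfx
    · simp only [lift, ofBool_false, ofBool_true, zero_mul, add_zero]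
      exact hf1
    · simp only [lift, ofBool_true, one_mul]
      rw [← hf1, ← hfx]
      exact hfadd one gen

end OneGen

end CDIS

/-- the free commutative doubly idempotent semiring with
constants on no generators has 2 elements; on one generator, 4 elements. -/
theorem free_cdis_card_empty_and_one :
    (∀ (F : Type) (_ : CDIS F) (ι : Empty → F),
      CDIS.IsFree Empty F ι → Nat.card F = 2) ∧
    (∀ (F : Type) (_ : CDIS F) (ι : PUnit → F),
      CDIS.IsFree PUnit F ι → Nat.card F = 4) := by
  refine ⟨fun F _ ι hF => ?_, fun F _ ι hF => ?_⟩
  · rw [hF.card_eq CDIS.isFree_bool, Nat.card_eq_fintype_card, Fintype.card_bool]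
  · rw [hF.card_eq CDIS.OneGen.isFree, Nat.card_eq_fintype_card]
    rfl
end

section
/- Let S be the set of sub(semi)lattices (subalgebras) of a semilattice (M,·), including the empty set, with operations ⟨A⟩·⟨B⟩ := ⟨A·B⟩ (where A·B is the complex product) and ⟨A⟩+⟨B⟩ := ⟨A ∪ B⟩ (the subalgebra generated by the union). Then (S, ·, +, ∅) is a 0-semilattice ordered semilattice: + is a join-semilattice operation with least element ∅, · is associative, commutative, and idempotent on S, · distributes over +, and C·∅ = ∅ for all C ∈ S. -/
/-! `⟨A⟩` is the subsemigroup closure, so the laws of `+` are those of a closure operator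
applied to `∪`. For `·`, idempotence and the entropic law give `⟨⟨A⟩·B⟩ = ⟨A·B⟩`, which
reduces associativity, commutativity and distributivity of `·` to the corresponding laws of
the complex product; `⟨C·C⟩ = ⟨C⟩` again uses `c = c·c`. -/

section
variable {M : Type*} [CommSemigroup M]

/-- The subsemilattice generated by a subset `A` of a semilattice `M`. -/
inductive SLgen (A : Set M) : M → Prop
  | base : ∀ a ∈ A, SLgen A a
  | mul : ∀ a b, SLgen A a → SLgen A b → SLgen A (a * b)

/-- The subsemilattice generated by `A`, as a set. -/
def genSet (A : Set M) : Set M := {x | SLgen A x}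

/-- A subalgebra (sub-semilattice) of `M`; the empty set qualifies. -/
def IsSubSL (C : Set M) : Prop := ∀ a ∈ C, ∀ b ∈ C, a * b ∈ C

/-- Product of subalgebras: `⟨A⟩·⟨B⟩ := ⟨A·B⟩`. -/
def subMul (C D : Set M) : Set M := genSet (Set.image2 (· * ·) C D)

/-- Join of subalgebras: `⟨A⟩+⟨B⟩ := ⟨A ∪ B⟩`. -/
def subAdd (C D : Set M) : Set M := genSet (C ∪ D)

namespace Subsemigroup

theorem closure_coe_closure_union_left (s t : Set M) :
    closure ((closure s : Set M) ∪ t) = closure (s ∪ t) := by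
  rw [closure_union, closure_union, closure_eq]

theorem closure_union_coe_closure_right (s t : Set M) :
    closure (s ∪ (closure t : Set M)) = closure (s ∪ t) := by
  rw [closure_union, closure_union, closure_eq]

theorem closure_coe_closure_union_coe_closure (s t : Set M) :
    closure ((closure s : Set M) ∪ closure t) = closure (s ∪ t) := by
  rw [closure_coe_closure_union_left, closure_union_coe_closure_right]

-- By the entropic law `(a * y) * (b * y) = (a * b) * (y * y)` and `y * y = y`,
-- right multiplication by `y` is a homomorphism.
theorem mul_mem_closure_image2_of_mem_closure (hidem : ∀ x : M, x * x = x) {s t : Set M}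
    {x y : M} (hx : x ∈ closure s) (hy : y ∈ t) :
    x * y ∈ closure (Set.image2 (· * ·) s t) := by
  induction hx using closure_induction with
  | mem a ha => exact subset_closure (Set.mem_image2_of_mem ha hy)
  | mul a b _ _ ha hb =>
    have hcomm : a * y * (b * y) = a * b * y := by rw [mul_mul_mul_comm, hidem]
    exact hcomm ▸ mul_mem ha hb

theorem closure_image2_coe_closure_left (hidem : ∀ x : M, x * x = x) (s t : Set M) :
    closure (Set.image2 (· * ·) (closure s : Set M) t) = closure (Set.image2 (· * ·) s t) := by
  refine le_antisymm (closure_le.mpr ?_) (closure_mono (Set.image2_subset_right subset_closure))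
  rintro _ ⟨x, hx, y, hy, rfl⟩
  exact mul_mem_closure_image2_of_mem_closure hidem hx hy

theorem closure_image2_coe_closure_right (hidem : ∀ x : M, x * x = x) (s t : Set M) :
    closure (Set.image2 (· * ·) s (closure t : Set M)) = closure (Set.image2 (· * ·) s t) := by
  rw [Set.image2_comm mul_comm, closure_image2_coe_closure_left hidem, Set.image2_comm mul_comm]

theorem closure_image2_mul_self (hidem : ∀ x : M, x * x = x) (s : Set M) :
    closure (Set.image2 (· * ·) s s) = closure s := by
  refine le_antisymm (closure_le.mpr ?_) (closure_mono fun x hx => ?_)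
  · rintro _ ⟨a, ha, b, hb, rfl⟩
    exact mul_mem (subset_closure ha) (subset_closure hb)
  · exact hidem x ▸ Set.mem_image2_of_mem hx hx

end Subsemigroup

open Subsemigroup

theorem genSet_eq_closure (A : Set M) : genSet A = closure A := by
  ext x
  refine ⟨fun hx => ?_, fun hx => ?_⟩
  · induction hx with
    | base a ha => exact subset_closure ha
    | mul a b _ _ ha hb => exact mul_mem ha hb
  · induction hx using closure_induction with
    | mem a ha => exact SLgen.base a ha
    | mul a b _ _ ha hb => exact SLgen.mul a b ha hb

theorem IsSubSL.genSet_eq {C : Set M} (hC : IsSubSL C) : genSet C = C := by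
  rw [genSet_eq_closure]
  exact congrArg SetLike.coe (closure_eq (⟨C, fun ha hb => hC _ ha _ hb⟩ : Subsemigroup M))

theorem isSubSL_genSet (A : Set M) : IsSubSL (genSet A) :=
  fun a ha b hb => SLgen.mul a b ha hb

theorem subAdd_assoc (A B C : Set M) : subAdd (subAdd A B) C = subAdd A (subAdd B C) := by
  simp only [subAdd, genSet_eq_closure]
  rw [closure_coe_closure_union_left, closure_union_coe_closure_right, Set.union_assoc]

theorem subAdd_comm (A B : Set M) : subAdd A B = subAdd B A := by
  rw [subAdd, Set.union_comm, subAdd]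

theorem IsSubSL.subAdd_self {C : Set M} (hC : IsSubSL C) : subAdd C C = C := by
  rw [subAdd, Set.union_self, hC.genSet_eq]

theorem IsSubSL.subAdd_empty {C : Set M} (hC : IsSubSL C) : subAdd C ∅ = C := by
  rw [subAdd, Set.union_empty, hC.genSet_eq]

theorem subMul_assoc (hidem : ∀ x : M, x * x = x) (A B C : Set M) :
    subMul (subMul A B) C = subMul A (subMul B C) := by
  simp only [subMul, genSet_eq_closure]
  rw [closure_image2_coe_closure_left hidem, closure_image2_coe_closure_right hidem,
    Set.image2_assoc mul_assoc]

theorem subMul_comm (A B : Set M) : subMul A B = subMul B A := by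
  rw [subMul, Set.image2_comm mul_comm, subMul]

theorem IsSubSL.subMul_self (hidem : ∀ x : M, x * x = x) {C : Set M} (hC : IsSubSL C) :
    subMul C C = C := by
  rw [subMul, genSet_eq_closure, closure_image2_mul_self hidem, ← genSet_eq_closure, hC.genSet_eq]

theorem subMul_subAdd (hidem : ∀ x : M, x * x = x) (A B C : Set M) :
    subMul A (subAdd B C) = subAdd (subMul A B) (subMul A C) := by
  simp only [subMul, subAdd, genSet_eq_closure]
  rw [closure_image2_coe_closure_right hidem, Set.image2_union_right,
    closure_coe_closure_union_coe_closure]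

theorem subMul_empty (A : Set M) : subMul A ∅ = ∅ := by
  rw [subMul, Set.image2_empty_right, genSet_eq_closure, Subsemigroup.closure_empty, coe_bot]

/-- the set of subalgebras of a semilattice `(M,·)`, including
`∅`, with `⟨A⟩·⟨B⟩ = ⟨A·B⟩` and `⟨A⟩+⟨B⟩ = ⟨A ∪ B⟩`, is a 0-semilattice
ordered semilattice with least element `∅`. -/
theorem subalgebras_zero_slo_semilattice
    (hidem : ∀ x : M, x * x = x) :
    ∀ C D E : Set M, IsSubSL C → IsSubSL D → IsSubSL E →
      IsSubSL (subAdd C D) ∧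
      IsSubSL (subMul C D) ∧
      subAdd (subAdd C D) E = subAdd C (subAdd D E) ∧
      subAdd C D = subAdd D C ∧
      subAdd C C = C ∧
      subAdd C (∅ : Set M) = C ∧
      subMul (subMul C D) E = subMul C (subMul D E) ∧
      subMul C D = subMul D C ∧
      subMul C C = C ∧
      subMul C (subAdd D E) = subAdd (subMul C D) (subMul C E) ∧
      subMul C (∅ : Set M) = ∅ := by
  intro C D E hC _ _
  exact ⟨isSubSL_genSet _, isSubSL_genSet _, subAdd_assoc C D E, subAdd_comm C D,
    hC.subAdd_self, hC.subAdd_empty, subMul_assoc hidem C D E, subMul_comm C D,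
    hC.subMul_self hidem, subMul_subAdd hidem C D E, subMul_empty C⟩

end
end
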